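/- arXiv:2403.19849 — 3 statements merged into one kernel-verified Lean document; each statement's English description precedes it below -/
import Mathlib

section
/- Let F : ℝ^d → ℝ be differentiable, μ-strongly convex and L-smooth with 0 < μ ≤ L, with global minimizer w̃. Fix w ∈ ℝ^d, a stepsize η with 0 ≤ η ≤ 2/(μ+L), and let e be an ℝ^d-valued random vector with E[e] = 0 and E[‖e‖²] ≤ σ². Define the random update w⁺ = w − η(∇F(w) + e). Then E[‖w⁺ − w̃‖²] ≤ (1 − ημ)²·‖w − w̃‖² + η²σ². -/
/-!
Put `G = F - (μ/2)‖·‖²`. Strong convexity and `L`-smoothness say that `G` and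
`(L - μ)/2 ‖·‖² - G` are both convex, which makes `∇G` monotone and `(L - μ)`-cocoercive:
`‖∇G x - ∇G y‖² ≤ (L - μ) ⟪∇G x - ∇G y, x - y⟫`. Since `∇F w̃ = 0`,
`w - η ∇F w - w̃ = (1 - ημ)(w - w̃) - η (∇G w - ∇G w̃)`, and expanding the square, these two
facts bound it by `(1 - ημ)² ‖w - w̃‖²` as soon as `η (μ + L) ≤ 2`. The noise is centred, so
in expectation the cross term vanishes and only `η² E‖e‖²` is added.
-/

open MeasureTheory Set InnerProductSpace AffineMap
open scoped RealInnerProductSpace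

section

variable {E : Type*} [NormedAddCommGroup E] [InnerProductSpace ℝ E]

lemma norm_sub_smul_sq_le_of_inner_nonneg {μ L η : ℝ} {u v : E} (hη₀ : 0 ≤ η)
    (hη : η * (μ + L) ≤ 2) (hmono : 0 ≤ ⟪v - μ • u, u⟫)
    (hcoco : ‖v - μ • u‖ ^ 2 ≤ (L - μ) * ⟪v - μ • u, u⟫) :
    ‖u - η • v‖ ^ 2 ≤ (1 - η * μ) ^ 2 * ‖u‖ ^ 2 := by
  have hsplit : u - η • v = (1 - η * μ) • u - η • (v - μ • u) := by module
  rw [hsplit, norm_sub_sq_real, norm_smul, norm_smul, inner_smul_left, inner_smul_right,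
    real_inner_comm, mul_pow, mul_pow, Real.norm_eq_abs, Real.norm_eq_abs, sq_abs, sq_abs]
  simp only [RCLike.conj_to_real]
  have : 0 ≤ η * (2 - η * (μ + L)) * ⟪v - μ • u, u⟫ :=
    mul_nonneg (mul_nonneg hη₀ (by linarith)) hmono
  nlinarith [mul_le_mul_of_nonneg_left hcoco (sq_nonneg η)]

variable [CompleteSpace E] {f g : E → ℝ} {f' : E → E} {p q x y : E} {C : ℝ}

lemma HasGradientAt.sub (hf : HasGradientAt f p x) (hg : HasGradientAt g q x) :
    HasGradientAt (fun y => f y - g y) (p - q) x := by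
  rw [hasGradientAt_iff_hasFDerivAt, map_sub]
  exact hf.hasFDerivAt.sub hg.hasFDerivAt

lemma hasGradientAt_half_mul_norm_sq (C : ℝ) (x : E) :
    HasGradientAt (fun y => C / 2 * ‖y‖ ^ 2) (C • x) x := by
  have hdual : toDual ℝ E (C • x) = (C / 2) • (2 • innerSL ℝ x) := by
    ext v
    simp only [map_smul, smul_apply, toDual_apply_apply, smul_eq_mul,
      innerSL_apply_apply, nsmul_eq_mul, Nat.cast_ofNat]
    ring
  rw [hasGradientAt_iff_hasFDerivAt, hdual]
  exact (hasStrictFDerivAt_norm_sq x).hasFDerivAt.const_mul (C / 2)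

lemma HasGradientAt.hasDerivAt_comp_lineMap {t : ℝ} (h : HasGradientAt f p (lineMap x y t)) :
    HasDerivAt (fun s => f (lineMap x y s)) ⟪p, y - x⟫ t :=
  h.hasFDerivAt.comp_hasDerivAt t hasDerivAt_lineMap

theorem ConvexOn.add_inner_le_of_hasGradientAt (hf : ConvexOn ℝ univ f)
    (hx : HasGradientAt f p x) (y : E) : f x + ⟪p, y - x⟫ ≤ f y := by
  have hline : ConvexOn ℝ univ (fun s : ℝ => f (lineMap x y s)) := by
    have := hf.comp_affineMap (lineMap x y)
    rwa [preimage_univ] at this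
  have hderiv : HasDerivAt (fun s : ℝ => f (lineMap x y s)) ⟪p, y - x⟫ 0 :=
    HasGradientAt.hasDerivAt_comp_lineMap (by rwa [lineMap_apply_zero])
  have := hline.le_slope_of_hasDerivAt (mem_univ 0) (mem_univ 1) one_pos hderiv
  simp only [slope_def_field, lineMap_apply_one, lineMap_apply_zero, sub_zero, div_one] at this
  linarith

theorem ConvexOn.inner_sub_nonneg_of_hasGradientAt (hf : ConvexOn ℝ univ f)
    (hx : HasGradientAt f p x) (hy : HasGradientAt f q y) : 0 ≤ ⟪p - q, x - y⟫ := by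
  have hxy := hf.add_inner_le_of_hasGradientAt hx y
  have hyx := hf.add_inner_le_of_hasGradientAt hy x
  rw [inner_sub_left, ← neg_sub x y, inner_neg_right] at *
  linarith

theorem convexOn_univ_of_inner_sub_nonneg (hf : ∀ x, HasGradientAt f (f' x) x)
    (hmono : ∀ x y, 0 ≤ ⟪f' x - f' y, x - y⟫) : ConvexOn ℝ univ f := by
  refine ⟨convex_univ, fun x _ y _ a b ha hb hab => ?_⟩
  set φ : ℝ → ℝ := fun s => f (lineMap x y s)
  have hφ : ∀ t, HasDerivAt φ ⟪f' (lineMap x y t), y - x⟫ t := fun t =>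
    (hf _).hasDerivAt_comp_lineMap
  have hφ_mono : Monotone (deriv φ) := by
    intro s t hst
    have hsub : lineMap x y t - lineMap x y s = (t - s) • (y - x) := by
      simp only [lineMap_apply_module']
      module
    have key := hmono (lineMap x y t) (lineMap x y s)
    rw [hsub, inner_smul_right, inner_sub_left] at key
    rw [(hφ s).deriv, (hφ t).deriv]
    rcases hst.eq_or_lt with rfl | hlt
    · exact le_rfl
    · linarith [(mul_nonneg_iff_of_pos_left (sub_pos.2 hlt)).1 key]
  have hφ_conv := hφ_mono.convexOn_univ_of_deriv fun t => (hφ t).differentiableAt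
  have := hφ_conv.2 (mem_univ 0) (mem_univ 1) ha hb hab
  simp only [φ, smul_eq_mul, mul_zero, mul_one, zero_add, lineMap_apply_zero,
    lineMap_apply_one] at this
  rwa [lineMap_apply_module, ← eq_sub_of_add_eq hab] at this

theorem convexOn_univ_half_mul_norm_sq_sub_of_lipschitz {L : ℝ}
    (hf : ∀ x, HasGradientAt f (f' x) x) (hL : ∀ x y, ‖f' x - f' y‖ ≤ L * ‖x - y‖) :
    ConvexOn ℝ univ (fun x => L / 2 * ‖x‖ ^ 2 - f x) := by
  refine convexOn_univ_of_inner_sub_nonneg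
    (fun x => (hasGradientAt_half_mul_norm_sq L x).sub (hf x)) fun x y => ?_
  have hrw : L • x - f' x - (L • y - f' y) = L • (x - y) - (f' x - f' y) := by module
  rw [hrw, inner_sub_left, inner_smul_left, real_inner_self_eq_norm_sq]
  have := real_inner_le_norm (f' x - f' y) (x - y)
  have := mul_le_mul_of_nonneg_right (hL x y) (norm_nonneg (x - y))
  simp only [RCLike.conj_to_real]
  nlinarith

theorem ConvexOn.le_add_inner_add_half_mul_norm_sq_of_hasGradientAt
    (hC : ConvexOn ℝ univ (fun x => C / 2 * ‖x‖ ^ 2 - f x)) (hx : HasGradientAt f p x) (y : E) :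
    f y ≤ f x + ⟪p, y - x⟫ + C / 2 * ‖y - x‖ ^ 2 := by
  have h := hC.add_inner_le_of_hasGradientAt ((hasGradientAt_half_mul_norm_sq C x).sub hx) y
  rw [inner_sub_left, inner_smul_left, inner_sub_right, real_inner_self_eq_norm_sq] at h
  have hn := norm_sub_sq_real y x
  rw [real_inner_comm] at hn
  simp only [RCLike.conj_to_real] at h
  linear_combination h - C / 2 * hn

theorem ConvexOn.add_inner_add_mul_norm_sq_le_of_hasGradientAt (hf : ConvexOn ℝ univ f)
    (hC : ConvexOn ℝ univ (fun x => C / 2 * ‖x‖ ^ 2 - f x))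
    (hx : HasGradientAt f p x) (hy : HasGradientAt f q y) (t : ℝ) :
    f x + ⟪p, y - x⟫ + (t - C * t ^ 2 / 2) * ‖q - p‖ ^ 2 ≤ f y := by
  -- compare both bounds at the point `y - t • (q - p)`
  have hlow := hf.add_inner_le_of_hasGradientAt hx (y - t • (q - p))
  have hup := hC.le_add_inner_add_half_mul_norm_sq_of_hasGradientAt hy (y - t • (q - p))
  have hz : y - t • (q - p) - x = (y - x) - t • (q - p) := by abel
  rw [hz, inner_sub_right, inner_smul_right] at hlow
  rw [sub_sub_cancel_left, inner_neg_right, inner_smul_right, norm_neg, norm_smul,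
    Real.norm_eq_abs, mul_pow, sq_abs] at hup
  have hqp : ⟪q, q - p⟫ - ⟪p, q - p⟫ = ‖q - p‖ ^ 2 := by
    rw [← inner_sub_left, real_inner_self_eq_norm_sq]
  linear_combination hlow + hup - t * hqp

lemma le_mul_of_forall_two_mul_sub_mul_sq_mul_le {a b C : ℝ} (hC : 0 ≤ C)
    (h : ∀ t, (2 * t - C * t ^ 2) * a ≤ b) : a ≤ C * b := by
  rcases hC.eq_or_lt with rfl | hC
  · rw [zero_mul]
    by_contra! hpos
    have := h ((b + 1) / (2 * a))
    field_simp at this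
    linarith
  · have := mul_le_mul_of_nonneg_left (h C⁻¹) hC.le
    field_simp at this
    linarith

theorem ConvexOn.norm_sub_sq_le_mul_inner_of_hasGradientAt (hC₀ : 0 ≤ C)
    (hf : ConvexOn ℝ univ f) (hC : ConvexOn ℝ univ (fun x => C / 2 * ‖x‖ ^ 2 - f x))
    (hx : HasGradientAt f p x) (hy : HasGradientAt f q y) :
    ‖p - q‖ ^ 2 ≤ C * ⟪p - q, x - y⟫ := by
  refine le_mul_of_forall_two_mul_sub_mul_sq_mul_le hC₀ fun t => ?_
  have hxy := hf.add_inner_add_mul_norm_sq_le_of_hasGradientAt hC hx hy t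
  have hyx := hf.add_inner_add_mul_norm_sq_le_of_hasGradientAt hC hy hx t
  rw [← norm_neg, neg_sub] at hxy
  rw [inner_sub_left, ← neg_sub x y, inner_neg_right] at *
  nlinarith

theorem norm_sub_smul_sub_sq_le_of_strongConvex_of_lipschitz {μ L η : ℝ} {x₀ : E}
    (hf : ∀ x, HasGradientAt f (f' x) x) (hμL : μ ≤ L)
    (hSC : ConvexOn ℝ univ (fun x => f x - μ / 2 * ‖x‖ ^ 2))
    (hL : ∀ x y, ‖f' x - f' y‖ ≤ L * ‖x - y‖) (hmin : f' x₀ = 0)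
    (hη₀ : 0 ≤ η) (hη : η * (μ + L) ≤ 2) (x : E) :
    ‖x - η • f' x - x₀‖ ^ 2 ≤ (1 - η * μ) ^ 2 * ‖x - x₀‖ ^ 2 := by
  have hg : ∀ x, HasGradientAt (fun x => f x - μ / 2 * ‖x‖ ^ 2) (f' x - μ • x) x := fun x =>
    (hf x).sub (hasGradientAt_half_mul_norm_sq μ x)
  have hsmooth : ConvexOn ℝ univ (fun x => (L - μ) / 2 * ‖x‖ ^ 2 - (f x - μ / 2 * ‖x‖ ^ 2)) := by
    convert convexOn_univ_half_mul_norm_sq_sub_of_lipschitz hf hL using 2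
    ring
  have hdiff : f' x - μ • x - (f' x₀ - μ • x₀) = f' x - μ • (x - x₀) := by
    rw [hmin]
    module
  have hmono := hSC.inner_sub_nonneg_of_hasGradientAt (hg x) (hg x₀)
  have hcoco := hSC.norm_sub_sq_le_mul_inner_of_hasGradientAt (sub_nonneg.2 hμL) hsmooth
    (hg x) (hg x₀)
  rw [hdiff] at hmono hcoco
  rw [sub_right_comm]
  exact norm_sub_smul_sq_le_of_inner_nonneg hη₀ hη hmono hcoco

lemma integral_norm_sub_smul_sq {Ω : Type*} [MeasurableSpace Ω] {P : Measure Ω}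
    [IsProbabilityMeasure P] {X : Ω → E} (hX : Integrable X P) (hmean : ∫ ω, X ω ∂P = 0)
    (hX2 : Integrable (fun ω => ‖X ω‖ ^ 2) P) (b : E) (c : ℝ) :
    ∫ ω, ‖b - c • X ω‖ ^ 2 ∂P = ‖b‖ ^ 2 + c ^ 2 * ∫ ω, ‖X ω‖ ^ 2 ∂P := by
  have hexpand : ∀ ω, ‖b - c • X ω‖ ^ 2 = ‖b‖ ^ 2 - 2 * c * ⟪b, X ω⟫ + c ^ 2 * ‖X ω‖ ^ 2 := by
    intro ω
    rw [norm_sub_sq_real, inner_smul_right, norm_smul, mul_pow, Real.norm_eq_abs, sq_abs]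
    ring
  have hinner : ∫ ω, ⟪b, X ω⟫ ∂P = 0 := by rw [integral_inner hX, hmean, inner_zero_right]
  have hcross : Integrable (fun ω => 2 * c * ⟪b, X ω⟫) P := (hX.const_inner b).const_mul _
  have hfirst : Integrable (fun ω => ‖b‖ ^ 2 - 2 * c * ⟪b, X ω⟫) P :=
    (integrable_const _).sub hcross
  simp_rw [hexpand]
  rw [integral_add hfirst (hX2.const_mul _),
    integral_sub (integrable_const _) hcross, integral_const_mul, integral_const_mul, hinner]
  simp

end

theorem stmt_2_general {d : ℕ} {Ω : Type*} [MeasureSpace Ω] [IsProbabilityMeasure (volume : Measure Ω)]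
    (μ L : ℝ) (hμL : μ ≤ L)
    (F : EuclideanSpace ℝ (Fin d) → ℝ)
    (hF : Differentiable ℝ F)
    (hSC : ConvexOn ℝ Set.univ (fun x => F x - μ / 2 * ‖x‖ ^ 2))
    (hSmooth : ∀ x y, ‖gradient F x - gradient F y‖ ≤ L * ‖x - y‖)
    (wtil : EuclideanSpace ℝ (Fin d)) (hmin : ∀ v, F wtil ≤ F v)
    (w : EuclideanSpace ℝ (Fin d))
    (η : ℝ) (hη0 : 0 ≤ η) (hη : η ≤ 2 / (μ + L))
    (e : Ω → EuclideanSpace ℝ (Fin d))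
    (he_int : Integrable e) (he_mean : ∫ ω, e ω = 0)
    (σsq : ℝ) (he_sq_int : Integrable (fun ω => ‖e ω‖ ^ 2))
    (he_var : ∫ ω, ‖e ω‖ ^ 2 ≤ σsq) :
    ∫ ω, ‖w - η • (gradient F w + e ω) - wtil‖ ^ 2 ≤
      (1 - η * μ) ^ 2 * ‖w - wtil‖ ^ 2 + η ^ 2 * σsq := by
  have hgrad_min : gradient F wtil = 0 := by
    rw [gradient, IsLocalMin.fderiv_eq_zero (Filter.Eventually.of_forall hmin), map_zero]
  have hη' : η * (μ + L) ≤ 2 := by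
    rcases le_or_gt 0 (μ + L) with hpos | hneg
    · exact mul_le_of_le_div₀ zero_le_two hpos hη
    · nlinarith
  have hcontract := norm_sub_smul_sub_sq_le_of_strongConvex_of_lipschitz
    (fun x => (hF x).hasGradientAt) hμL hSC hSmooth hgrad_min hη0 hη' w
  calc ∫ ω, ‖w - η • (gradient F w + e ω) - wtil‖ ^ 2
      = ∫ ω, ‖(w - η • gradient F w - wtil) - η • e ω‖ ^ 2 := by
        congr with ω
        rw [smul_add]
        abel_nf
    _ = ‖w - η • gradient F w - wtil‖ ^ 2 + η ^ 2 * ∫ ω, ‖e ω‖ ^ 2 :=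
        integral_norm_sub_smul_sq he_int he_mean he_sq_int _ _
    _ ≤ (1 - η * μ) ^ 2 * ‖w - wtil‖ ^ 2 + η ^ 2 * σsq := by gcongr

/-- Noisy gradient step. For `F` differentiable, `μ`-strongly convex,
`L`-smooth, minimizer `w̃`, stepsize `0 ≤ η ≤ 2/(μ+L)`, and a zero-mean random vector `e`
with `E[‖e‖²] ≤ σ²`, the update `w⁺ = w − η(∇F(w) + e)` satisfies
`E[‖w⁺ − w̃‖²] ≤ (1 − ημ)²‖w − w̃‖² + η²σ²`. -/
theorem stmt_2 {d : ℕ} {Ω : Type*} [MeasureSpace Ω] [IsProbabilityMeasure (volume : Measure Ω)]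
    (μ L : ℝ) (hμ : 0 < μ) (hμL : μ ≤ L)
    (F : EuclideanSpace ℝ (Fin d) → ℝ)
    (hF : Differentiable ℝ F)
    (hSC : ConvexOn ℝ Set.univ (fun x => F x - μ / 2 * ‖x‖ ^ 2))
    (hSmooth : ∀ x y, ‖gradient F x - gradient F y‖ ≤ L * ‖x - y‖)
    (wtil : EuclideanSpace ℝ (Fin d)) (hmin : ∀ v, F wtil ≤ F v)
    (w : EuclideanSpace ℝ (Fin d))
    (η : ℝ) (hη0 : 0 ≤ η) (hη : η ≤ 2 / (μ + L))
    (e : Ω → EuclideanSpace ℝ (Fin d))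
    (he_int : Integrable e) (he_mean : ∫ ω, e ω = 0)
    (σsq : ℝ) (he_sq_int : Integrable (fun ω => ‖e ω‖ ^ 2))
    (he_var : ∫ ω, ‖e ω‖ ^ 2 ≤ σsq) :
    ∫ ω, ‖w - η • (gradient F w + e ω) - wtil‖ ^ 2 ≤
      (1 - η * μ) ^ 2 * ‖w - wtil‖ ^ 2 + η ^ 2 * σsq :=
  stmt_2_general μ L hμL F hF hSC hSmooth wtil hmin w η hη0 hη e he_int he_mean σsq he_sq_int he_var
end

section
/- Let f_1, …, f_N : ℝ^d → ℝ be differentiable, and let p_1, …, p_N ∈ [0,1] with Σ_{m=1}^N p_m = 1. Define F(w) = (1/N)·Σ_{m=1}^N f_m(w) and F̃(w) = Σ_{m=1}^N p_m f_m(w). Suppose F̃ is μ̃-strongly convex with μ̃ > 0 and has global minimizer w̃, F has global minimizer w* (so ∇F(w*) = 0 and ∇F̃(w̃) = 0), and (1/N)·Σ_{m=1}^N ‖∇f_m(w*)‖² ≤ κ². Then ‖w̃ − w*‖ ≤ (Nκ/μ̃)·max_{1 ≤ m ≤ N} |1/N − p_m|. -/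
/-!
Since `w*` minimizes `F`, the local gradients `gₘ = ∇fₘ(w*)` sum to zero, so
`∇F̃(w*) = Σ pₘ gₘ = Σ (pₘ - 1/N) gₘ`, whose norm is at most `maxₘ |1/N - pₘ| · Σ ‖gₘ‖ ≤ max · Nκ`
by Cauchy–Schwarz. On the other hand, adding the strong-convexity inequalities of `F̃` at `w*` and
at its critical point `w̃` gives `μ̃ ‖w̃ - w*‖ ≤ ‖∇F̃(w*)‖`.
-/

open InnerProductSpace Finset

theorem ConvexOn.apply_sub_le_sub_of_hasFDerivAt {E : Type*} [NormedAddCommGroup E]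
    [NormedSpace ℝ E] {s : Set E} {G : E → ℝ} {G' : StrongDual ℝ E} {x y : E}
    (hG : ConvexOn ℝ s G) (hx : x ∈ s) (hy : y ∈ s) (hG' : HasFDerivAt G G' x) :
    G' (y - x) ≤ G y - G x := by
  have hline : HasDerivAt (G ∘ AffineMap.lineMap (k := ℝ) x y) (G' (y - x)) 0 :=
    hG'.comp_hasDerivAt_of_eq (0 : ℝ) AffineMap.hasDerivAt_lineMap
      (AffineMap.lineMap_apply_zero x y).symm
  have hconv := hG.comp_affineMap (AffineMap.lineMap (k := ℝ) x y)
  simpa [slope_def_field] using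
    hconv.le_slope_of_hasDerivAt (by simpa using hx) (by simpa using hy) one_pos hline

section InnerProductSpace

variable {E : Type*} [NormedAddCommGroup E] [InnerProductSpace ℝ E] [CompleteSpace E]
  {G : E → ℝ} {g x y : E}

theorem IsLocalMin.hasGradientAt_eq_zero (hmin : IsLocalMin G x) (hg : HasGradientAt G g x) :
    g = 0 :=
  (toDual ℝ E).map_eq_zero_iff.mp (hmin.hasFDerivAt_eq_zero (hasGradientAt_iff_hasFDerivAt.mp hg))

theorem StrongConvexOn.inner_gradient_add_le_sub {s : Set E} {μ : ℝ} (hG : StrongConvexOn s μ G)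
    (hx : x ∈ s) (hy : y ∈ s) (hg : HasGradientAt G g x) :
    ⟪g, y - x⟫_ℝ + μ / 2 * ‖y - x‖ ^ 2 ≤ G y - G x := by
  have hH' := (hasGradientAt_iff_hasFDerivAt.mp hg).sub
    ((hasStrictFDerivAt_norm_sq x).hasFDerivAt.const_mul (μ / 2))
  have hH := (strongConvexOn_iff_convex.mp hG).apply_sub_le_sub_of_hasFDerivAt hx hy hH'
  simp only [sub_apply, smul_apply, toDual_apply_apply, innerSL_apply_apply, smul_eq_mul,
    nsmul_eq_mul] at hH
  have hsq : ‖y - x‖ ^ 2 = ‖y‖ ^ 2 - ‖x‖ ^ 2 - 2 * ⟪x, y - x⟫_ℝ := by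
    rw [norm_sub_sq_real, inner_sub_right, real_inner_self_eq_norm_sq, real_inner_comm]
    ring
  rw [hsq]
  linarith

theorem StrongConvexOn.mul_norm_sub_le_norm_gradient {s : Set E} {μ : ℝ}
    (hG : StrongConvexOn s μ G) (hx : x ∈ s) (hy : y ∈ s) (hg : HasGradientAt G g x)
    (hcrit : HasGradientAt G 0 y) : μ * ‖y - x‖ ≤ ‖g‖ := by
  have hxy := hG.inner_gradient_add_le_sub hx hy hg
  have hyx := hG.inner_gradient_add_le_sub hy hx hcrit
  rw [inner_zero_left, norm_sub_rev] at hyx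
  have hcs := real_inner_le_norm g (x - y)
  rw [← neg_sub y x, inner_neg_right, norm_neg] at hcs
  -- adding `hxy` and `hyx`: `μ ‖y - x‖² ≤ -⟪g, y - x⟫ ≤ ‖g‖ ‖y - x‖`
  rcases (norm_nonneg (y - x)).eq_or_lt with h0 | hpos
  · rw [← h0, mul_zero]; exact norm_nonneg g
  · exact le_of_mul_le_mul_right (by nlinarith) hpos

theorem hasGradientAt_sum_mul {ι : Type*} (s : Finset ι) (c : ι → ℝ) {f : ι → E → ℝ}
    {g : ι → E} (hf : ∀ i ∈ s, HasGradientAt (f i) (g i) x) :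
    HasGradientAt (fun w ↦ ∑ i ∈ s, c i * f i w) (∑ i ∈ s, c i • g i) x := by
  rw [hasGradientAt_iff_hasFDerivAt, map_sum]
  simp only [map_smul]
  exact HasFDerivAt.fun_sum fun i hi ↦ (hasGradientAt_iff_hasFDerivAt.mp (hf i hi)).const_mul (c i)

end InnerProductSpace

theorem norm_sum_smul_le_mul_sum_norm {ι 𝕜 V : Type*} [NormedField 𝕜] [SeminormedAddCommGroup V]
    [NormedSpace 𝕜 V] (s : Finset ι) (c : ι → 𝕜) (v : ι → V) {M : ℝ} (hc : ∀ i ∈ s, ‖c i‖ ≤ M) :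
    ‖∑ i ∈ s, c i • v i‖ ≤ M * ∑ i ∈ s, ‖v i‖ :=
  calc ‖∑ i ∈ s, c i • v i‖ ≤ ∑ i ∈ s, ‖c i‖ * ‖v i‖ := by
        simpa only [norm_smul] using norm_sum_le s fun i ↦ c i • v i
    _ ≤ ∑ i ∈ s, M * ‖v i‖ := by gcongr with i hi; exact hc i hi
    _ = M * ∑ i ∈ s, ‖v i‖ := (mul_sum s _ M).symm

theorem sum_le_card_mul_of_sum_sq_le {ι : Type*} (s : Finset ι) (a : ι → ℝ) {κ : ℝ} (hκ : 0 ≤ κ)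
    (h : ∑ i ∈ s, a i ^ 2 ≤ #s * κ ^ 2) : ∑ i ∈ s, a i ≤ #s * κ := by
  have hsq : (∑ i ∈ s, a i) ^ 2 ≤ (#s * κ) ^ 2 :=
    calc (∑ i ∈ s, a i) ^ 2 ≤ #s * ∑ i ∈ s, a i ^ 2 := sq_sum_le_card_mul_sum_sq
      _ ≤ #s * (#s * κ ^ 2) := by gcongr
      _ = (#s * κ) ^ 2 := by ring
  exact (le_abs_self _).trans (abs_le_of_sq_le_sq hsq (by positivity))

theorem stmt_5_general {d N : ℕ} (hN : 0 < N)
    (f : Fin N → EuclideanSpace ℝ (Fin d) → ℝ)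
    (hf : ∀ m, Differentiable ℝ (f m))
    (p : Fin N → ℝ)
    (F Ftil : EuclideanSpace ℝ (Fin d) → ℝ)
    (hF : ∀ w, F w = (1 / (N : ℝ)) * ∑ m, f m w)
    (hFtil : ∀ w, Ftil w = ∑ m, p m * f m w)
    (μt : ℝ) (hμt : 0 < μt)
    (hSC : ConvexOn ℝ Set.univ (fun x => Ftil x - μt / 2 * ‖x‖ ^ 2))
    (wtil : EuclideanSpace ℝ (Fin d)) (hwtil : ∀ w, Ftil wtil ≤ Ftil w)
    (wstar : EuclideanSpace ℝ (Fin d)) (hwstar : ∀ w, F wstar ≤ F w)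
    (κ : ℝ) (hκ0 : 0 ≤ κ)
    (hκ : (1 / (N : ℝ)) * ∑ m, ‖gradient (f m) wstar‖ ^ 2 ≤ κ ^ 2) :
    ‖wtil - wstar‖ ≤ (N : ℝ) * κ / μt *
      (Finset.univ.sup' (Finset.univ_nonempty_iff.mpr (Fin.pos_iff_nonempty.mp hN))
        fun m => |1 / (N : ℝ) - p m|) := by
  obtain rfl : Ftil = fun w ↦ ∑ m, p m * f m w := funext hFtil
  set M := Finset.univ.sup' _ fun m => |1 / (N : ℝ) - p m|
  set g := fun m ↦ gradient (f m) wstar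
  have hgrad (c : Fin N → ℝ) (w) : HasGradientAt (fun w ↦ ∑ m, c m * f m w)
      (∑ m, c m • gradient (f m) w) w :=
    hasGradientAt_sum_mul _ c fun m _ ↦ (hf m w).hasGradientAt
  have hF_min : IsLocalMin (fun w ↦ ∑ m, (1 / (N : ℝ)) * f m w) wstar :=
    Filter.Eventually.of_forall fun w ↦ by simpa only [hF, mul_sum] using hwstar w
  have hg_sum : ∑ m, (1 / (N : ℝ)) • g m = 0 :=
    hF_min.hasGradientAt_eq_zero (hgrad (fun _ ↦ 1 / (N : ℝ)) wstar)
  have hcrit : HasGradientAt (fun w ↦ ∑ m, p m * f m w) 0 wtil := by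
    have hmin : IsLocalMin (fun w ↦ ∑ m, p m * f m w) wtil := Filter.Eventually.of_forall hwtil
    simpa only [hmin.hasGradientAt_eq_zero (hgrad p wtil)] using hgrad p wtil
  have hbias : ∑ m, p m • g m = ∑ m, (p m - 1 / (N : ℝ)) • g m := by
    simp only [sub_smul, sum_sub_distrib, hg_sum, sub_zero]
  have hM : ∀ m ∈ univ, ‖p m - 1 / (N : ℝ)‖ ≤ M := fun m hm ↦ by
    rw [Real.norm_eq_abs, abs_sub_comm]; exact le_sup' (fun m ↦ |1 / (N : ℝ) - p m|) hm
  have hM0 : 0 ≤ M := (norm_nonneg _).trans (hM ⟨0, hN⟩ (mem_univ _))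
  have hsum_g : ∑ m, ‖g m‖ ≤ N * κ := by
    have := sum_le_card_mul_of_sum_sq_le univ (fun m ↦ ‖g m‖) hκ0
    simp only [card_univ, Fintype.card_fin] at this
    refine this ?_
    rwa [one_div, inv_mul_le_iff₀ (by exact_mod_cast hN)] at hκ
  have hstrong := (strongConvexOn_iff_convex.mpr hSC).mul_norm_sub_le_norm_gradient
    (Set.mem_univ wstar) (Set.mem_univ wtil) (hgrad p wstar) hcrit
  rw [div_mul_eq_mul_div, le_div_iff₀ hμt]
  calc ‖wtil - wstar‖ * μt ≤ ‖∑ m, (p m - 1 / (N : ℝ)) • g m‖ := by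
        rw [mul_comm, ← hbias]; exact hstrong
    _ ≤ M * ∑ m, ‖g m‖ := norm_sum_smul_le_mul_sum_norm _ _ _ hM
    _ ≤ M * (N * κ) := by gcongr
    _ = N * κ * M := mul_comm _ _

/-- Model-bias bound. With `F = (1/N)Σ f_m` (minimizer `w*`),
`F̃ = Σ p_m f_m` `μ̃`-strongly convex with minimizer `w̃`, and
`(1/N)Σ‖∇f_m(w*)‖² ≤ κ²`, then `‖w̃ − w*‖ ≤ (Nκ/μ̃)·max_m |1/N − p_m|`. -/
theorem stmt_5 {d N : ℕ} (hN : 0 < N)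
    (f : Fin N → EuclideanSpace ℝ (Fin d) → ℝ)
    (hf : ∀ m, Differentiable ℝ (f m))
    (p : Fin N → ℝ) (hp0 : ∀ m, 0 ≤ p m) (hp1 : ∀ m, p m ≤ 1)
    (hpsum : ∑ m, p m = 1)
    (F Ftil : EuclideanSpace ℝ (Fin d) → ℝ)
    (hF : ∀ w, F w = (1 / (N : ℝ)) * ∑ m, f m w)
    (hFtil : ∀ w, Ftil w = ∑ m, p m * f m w)
    (μt : ℝ) (hμt : 0 < μt)
    (hSC : ConvexOn ℝ Set.univ (fun x => Ftil x - μt / 2 * ‖x‖ ^ 2))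
    (wtil : EuclideanSpace ℝ (Fin d)) (hwtil : ∀ w, Ftil wtil ≤ Ftil w)
    (wstar : EuclideanSpace ℝ (Fin d)) (hwstar : ∀ w, F wstar ≤ F w)
    (κ : ℝ) (hκ0 : 0 ≤ κ)
    (hκ : (1 / (N : ℝ)) * ∑ m, ‖gradient (f m) wstar‖ ^ 2 ≤ κ ^ 2) :
    ‖wtil - wstar‖ ≤ (N : ℝ) * κ / μt *
      (Finset.univ.sup' (Finset.univ_nonempty_iff.mpr (Fin.pos_iff_nonempty.mp hN))
        fun m => |1 / (N : ℝ) - p m|) :=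
  stmt_5_general hN f hf p F Ftil hF hFtil μt hμt hSC wtil hwtil wstar hwstar κ hκ0 hκ
end

section
/- Let 0 < c_1 ≤ c_2 ≤ ⋯ ≤ c_N. Consider values A > 0 such that there exist γ_1, …, γ_N > 0 with γ_m·exp(−c_m·γ_m²) = A for every m (an equal-weight, i.e. zero-bias, configuration). Then: (i) such a configuration exists for A = 1/√(2·e·c_N); and (ii) no such configuration exists for any A > 1/√(2·e·c_N). Hence the maximum common weight achievable by a zero-bias configuration is 1/√(2·e·c_N), determined by the largest constant c_N (the device with the worst average path loss). -/
/-!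
The weight `γ ↦ γ * exp (-c * γ ^ 2)` vanishes at `0` and, since `t * exp (-t) ≤ exp (-1)` with
`t = 2 c γ ^ 2`, never exceeds its value `1 / √(2 e c)` at `γ = 1 / √(2 c)`. By the intermediate
value theorem every `A ∈ (0, 1 / √(2 e c)]` is attained at some `γ > 0`. A common weight must be
attained for every `c m`, so it is at most `1 / √(2 e c_N)`, the smallest of these maxima, and that
value is attained for every `m` because the `c m` are increasing.
-/

open Real Set

theorem mul_exp_neg_mul_sq_le (c γ : ℝ) (hc : 0 < c) :
    γ * exp (-c * γ ^ 2) ≤ 1 / √(2 * exp 1 * c) := by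
  have hsq : (γ * exp (-c * γ ^ 2)) ^ 2 ≤ (2 * exp 1 * c)⁻¹ := by
    have key := mul_exp_neg_le_exp_neg_one (2 * c * γ ^ 2)
    calc (γ * exp (-c * γ ^ 2)) ^ 2
        = 2 * c * γ ^ 2 * exp (-(2 * c * γ ^ 2)) / (2 * c) := by
          rw [mul_pow, ← exp_nat_mul]; field_simp; ring_nf
      _ ≤ exp (-1) / (2 * c) := by gcongr
      _ = (2 * exp 1 * c)⁻¹ := by rw [exp_neg]; field_simp
  calc γ * exp (-c * γ ^ 2) ≤ |γ * exp (-c * γ ^ 2)| := le_abs_self _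
    _ ≤ √(2 * exp 1 * c)⁻¹ := abs_le_sqrt hsq
    _ = 1 / √(2 * exp 1 * c) := by rw [sqrt_inv, one_div]

theorem mul_exp_neg_mul_sq_inv_sqrt_two_mul (c : ℝ) (hc : 0 < c) :
    (√(2 * c))⁻¹ * exp (-c * (√(2 * c))⁻¹ ^ 2) = 1 / √(2 * exp 1 * c) := by
  have hsq : (√(2 * c))⁻¹ ^ 2 = (2 * c)⁻¹ := by rw [inv_pow, sq_sqrt (by positivity)]
  have hexp : exp (-c * (2 * c)⁻¹) = (√(exp 1))⁻¹ := by
    rw [sqrt_eq_rpow, ← exp_mul, ← exp_neg]; congr 1; field_simp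
  rw [hsq, hexp, ← mul_inv, ← sqrt_mul (by positivity), one_div, mul_right_comm]

theorem exists_pos_mul_exp_neg_mul_sq_eq {c A : ℝ} (hc : 0 < c) (hA : 0 < A)
    (hAle : A ≤ 1 / √(2 * exp 1 * c)) : ∃ γ, 0 < γ ∧ γ * exp (-c * γ ^ 2) = A := by
  set γmax := (√(2 * c))⁻¹
  have hcont : ContinuousOn (fun γ : ℝ ↦ γ * exp (-c * γ ^ 2)) (Icc 0 γmax) := by
    fun_prop
  have hA_mem : A ∈ Ioc ((fun γ : ℝ ↦ γ * exp (-c * γ ^ 2)) 0)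
      ((fun γ : ℝ ↦ γ * exp (-c * γ ^ 2)) γmax) := by
    refine ⟨by simpa using hA, ?_⟩
    dsimp only
    rwa [mul_exp_neg_mul_sq_inv_sqrt_two_mul c hc]
  obtain ⟨γ, ⟨hγ_pos, -⟩, hγ⟩ :=
    intermediate_value_Ioc (by positivity) hcont hA_mem
  exact ⟨γ, hγ_pos, hγ⟩

/-- For `0 < c_1 ≤ ⋯ ≤ c_N`, a zero-bias (equal-weight) configuration
`γ_m > 0` with `γ_m·exp(−c_m γ_m²) = A` for all `m` exists for `A = 1/√(2e·c_N)`,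
and does not exist for any `A > 1/√(2e·c_N)`; the worst (largest) constant `c_N`
determines the maximal common weight. -/
theorem stmt_11 (N : ℕ) (hN : 0 < N) (c : Fin N → ℝ)
    (hc0 : ∀ m, 0 < c m) (hmono : Monotone c) :
    (∃ γ : Fin N → ℝ, ∀ m, 0 < γ m ∧
      γ m * Real.exp (-c m * (γ m) ^ 2) =
        1 / Real.sqrt (2 * Real.exp 1 * c ⟨N - 1, Nat.sub_lt hN one_pos⟩)) ∧
    (∀ A : ℝ, 1 / Real.sqrt (2 * Real.exp 1 * c ⟨N - 1, Nat.sub_lt hN one_pos⟩) < A →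
      ¬ ∃ γ : Fin N → ℝ, ∀ m, 0 < γ m ∧ γ m * Real.exp (-c m * (γ m) ^ 2) = A) := by
  set last : Fin N := ⟨N - 1, Nat.sub_lt hN one_pos⟩
  refine ⟨?_, fun A hA ⟨γ, hγ⟩ ↦ ?_⟩
  · have hc_last := hc0 last
    have hle_last (m : Fin N) : c m ≤ c last := hmono (Fin.le_def.2 (Nat.le_sub_one_of_lt m.isLt))
    choose γ hγ using fun m ↦ exists_pos_mul_exp_neg_mul_sq_eq (hc0 m)
      (by positivity : 0 < 1 / √(2 * exp 1 * c last))
      (by have hc_m := hc0 m; gcongr; exact hle_last m)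
    exact ⟨γ, hγ⟩
  · have hbound := mul_exp_neg_mul_sq_le (c last) (γ last) (hc0 last)
    rw [(hγ last).2] at hbound
    exact hA.not_ge hbound
end
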